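/- Let P(u,v) = (k₁·u^{β₁+β₂} + 2k₂·u^{β₁}·v^{β₂} + k₃·v^{β₁+β₂})^{δ/(β₁+β₂)} be a 2-input Kadiyala production function with parameters satisfying (★★), and assume additionally that k₂ = 0 (so k₁ > 0 and k₃ > 0) and δ ≠ 1. Then the Gaussian curvature of the graph surface {(u,v,P(u,v)) : u>0, v>0} vanishes at every point of (0,∞)² if and only if β₁ + β₂ = 1. -/

import Mathlib

open Real

/-- Partial derivative in the first variable. -/
noncomputable def pdu (f : ℝ → ℝ → ℝ) : ℝ → ℝ → ℝ := fun u v => deriv (fun x => f x v) u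

/-- Partial derivative in the second variable. -/
noncomputable def pdv (f : ℝ → ℝ → ℝ) : ℝ → ℝ → ℝ := fun u v => deriv (fun y => f u y) v

/-- Hessian determinant `f_uu · f_vv − f_uv²` of `f` at `(u, v)`. -/
noncomputable def hessDet (f : ℝ → ℝ → ℝ) (u v : ℝ) : ℝ :=
  pdu (pdu f) u v * pdv (pdv f) u v - pdv (pdu f) u v ^ 2

/-- Gaussian curvature of the graph surface `{(u, v, f u v)}` at `(u, v)`:
`K = (f_uu · f_vv − f_uv²) / (1 + f_u² + f_v²)²`. -/
noncomputable def gaussK (f : ℝ → ℝ → ℝ) (u v : ℝ) : ℝ :=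
  hessDet f u v / (1 + pdu f u v ^ 2 + pdv f u v ^ 2) ^ 2

/-- The 2-input Kadiyala production function
`P(u,v) = (k₁·u^(β₁+β₂) + 2k₂·u^β₁·v^β₂ + k₃·v^(β₁+β₂))^(δ/(β₁+β₂))`. -/
noncomputable def PKad (k₁ k₂ k₃ β₁ β₂ δ : ℝ) : ℝ → ℝ → ℝ := fun u v =>
  (k₁ * u ^ (β₁ + β₂) + 2 * k₂ * u ^ β₁ * v ^ β₂ + k₃ * v ^ (β₁ + β₂)) ^ (δ / (β₁ + β₂))

/-!
For `f u v = g (φ u + ψ v)` the Hessian determinant is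
`g' g'' (φ'² ψ'' + ψ'² φ'') + g'² φ'' ψ''`. For the CES function `(k₁ u^s + k₃ v^s)^c`
this factors as `c² k₁ k₃ s² (s - 1) (c s - 1)` times a positive quantity, and `c s = δ ≠ 1`,
so the curvature vanishes exactly when `s = β₁ + β₂ = 1`.
-/

open Filter Topology Set

lemma gaussK_eq_zero_iff (f : ℝ → ℝ → ℝ) (u v : ℝ) : gaussK f u v = 0 ↔ hessDet f u v = 0 := by
  have : (1 + pdu f u v ^ 2 + pdv f u v ^ 2) ^ 2 ≠ 0 := by positivity
  simp [gaussK, this]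

lemma hessDet_comp_add {U V : Set ℝ} {g g' g'' φ φ' φ'' ψ ψ' ψ'' : ℝ → ℝ}
    (hU : IsOpen U) (hV : IsOpen V)
    (hφ : ∀ x ∈ U, HasDerivAt φ (φ' x) x) (hφ' : ∀ x ∈ U, HasDerivAt φ' (φ'' x) x)
    (hψ : ∀ y ∈ V, HasDerivAt ψ (ψ' y) y) (hψ' : ∀ y ∈ V, HasDerivAt ψ' (ψ'' y) y)
    (hg : ∀ x ∈ U, ∀ y ∈ V, HasDerivAt g (g' (φ x + ψ y)) (φ x + ψ y))
    (hg' : ∀ x ∈ U, ∀ y ∈ V, HasDerivAt g' (g'' (φ x + ψ y)) (φ x + ψ y))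
    {u v : ℝ} (hu : u ∈ U) (hv : v ∈ V) :
    hessDet (fun x y => g (φ x + ψ y)) u v =
      g' (φ u + ψ v) * g'' (φ u + ψ v) * (φ' u ^ 2 * ψ'' v + ψ' v ^ 2 * φ'' u)
        + g' (φ u + ψ v) ^ 2 * φ'' u * ψ'' v := by
  set f : ℝ → ℝ → ℝ := fun x y => g (φ x + ψ y)
  have hfu : ∀ x ∈ U, ∀ y ∈ V, pdu f x y = g' (φ x + ψ y) * φ' x := fun x hx y hy =>
    ((hg x hx y hy).comp x ((hφ x hx).add_const (ψ y))).deriv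
  have hfv : ∀ x ∈ U, ∀ y ∈ V, pdv f x y = g' (φ x + ψ y) * ψ' y := fun x hx y hy =>
    ((hg x hx y hy).comp y ((hψ y hy).const_add (φ x))).deriv
  have hfuu : pdu (pdu f) u v = g'' (φ u + ψ v) * φ' u * φ' u + g' (φ u + ψ v) * φ'' u := by
    have hev : (fun x => pdu f x v) =ᶠ[𝓝 u] fun x => g' (φ x + ψ v) * φ' x :=
      eventually_of_mem (hU.mem_nhds hu) fun x hx => hfu x hx v hv
    exact hev.deriv_eq.trans
      ((((hg' u hu v hv).comp u ((hφ u hu).add_const (ψ v))).mul (hφ' u hu)).deriv)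
  have hfvv : pdv (pdv f) u v = g'' (φ u + ψ v) * ψ' v * ψ' v + g' (φ u + ψ v) * ψ'' v := by
    have hev : (fun y => pdv f u y) =ᶠ[𝓝 v] fun y => g' (φ u + ψ y) * ψ' y :=
      eventually_of_mem (hV.mem_nhds hv) fun y hy => hfv u hu y hy
    exact hev.deriv_eq.trans
      ((((hg' u hu v hv).comp v ((hψ v hv).const_add (φ u))).mul (hψ' v hv)).deriv)
  have hfuv : pdv (pdu f) u v = g'' (φ u + ψ v) * ψ' v * φ' u := by
    have hev : (fun y => pdu f u y) =ᶠ[𝓝 v] fun y => g' (φ u + ψ y) * φ' u :=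
      eventually_of_mem (hV.mem_nhds hv) fun y hy => hfu u hu y hy
    exact hev.deriv_eq.trans
      ((((hg' u hu v hv).comp v ((hψ v hv).const_add (φ u))).mul_const (φ' u)).deriv)
  rw [hessDet, hfuu, hfvv, hfuv]
  ring

lemma hasDerivAt_const_mul_rpow (a s : ℝ) {x : ℝ} (hx : 0 < x) :
    HasDerivAt (fun x => a * x ^ s) (a * (s * x ^ (s - 1))) x :=
  (hasDerivAt_rpow_const (Or.inl hx.ne')).const_mul a

lemma hessDet_rpow_add_rpow {a b s c u v : ℝ} (ha : 0 < a) (hb : 0 < b) (hu : 0 < u) (hv : 0 < v) :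
    hessDet (fun x y => (a * x ^ s + b * y ^ s) ^ c) u v =
      c ^ 2 * a * b * s ^ 2 * (s - 1) * (c * s - 1)
        * ((a * u ^ s + b * v ^ s) ^ (c - 1)) ^ 2 * u ^ (s - 2) * v ^ (s - 2) := by
  have hpos : ∀ x ∈ Ioi (0 : ℝ), ∀ y ∈ Ioi (0 : ℝ), 0 < a * x ^ s + b * y ^ s :=
    fun x (hx : 0 < x) y (hy : 0 < y) => by positivity
  rw [hessDet_comp_add (g := fun t => t ^ c) (g' := fun t => c * t ^ (c - 1))
    (g'' := fun t => c * ((c - 1) * t ^ (c - 1 - 1))) isOpen_Ioi isOpen_Ioi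
    (fun x hx => hasDerivAt_const_mul_rpow a s hx)
    (fun x hx => (hasDerivAt_const_mul_rpow s (s - 1) hx).const_mul a)
    (fun y hy => hasDerivAt_const_mul_rpow b s hy)
    (fun y hy => (hasDerivAt_const_mul_rpow s (s - 1) hy).const_mul b)
    (fun x hx y hy => hasDerivAt_rpow_const (Or.inl (hpos x hx y hy).ne'))
    (fun x hx y hy => hasDerivAt_const_mul_rpow c (c - 1) (hpos x hx y hy))
    (mem_Ioi.2 hu) (mem_Ioi.2 hv)]
  have ht := hpos u hu v hv
  simp only [rpow_sub_one hu.ne', rpow_sub_one hv.ne', rpow_sub_one ht.ne', rpow_sub hu s 2,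
    rpow_sub hv s 2, rpow_two]
  field_simp
  ring

lemma hessDet_rpow_add_rpow_eq_zero_iff {a b s c u v : ℝ} (ha : 0 < a) (hb : 0 < b)
    (hs : s ≠ 0) (hc : c ≠ 0) (hu : 0 < u) (hv : 0 < v) :
    hessDet (fun x y => (a * x ^ s + b * y ^ s) ^ c) u v = 0 ↔ s = 1 ∨ c * s = 1 := by
  have ht : 0 < a * u ^ s + b * v ^ s := by positivity
  simp [hessDet_rpow_add_rpow ha hb hu hv, ha.ne', hb.ne', hs, hc, (rpow_pos_of_pos ht _).ne',
    (rpow_pos_of_pos hu _).ne', (rpow_pos_of_pos hv _).ne', sub_eq_zero]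

theorem kadiyala_ces_developable_iff_general
    (k₁ k₂ k₃ β₁ β₂ δ : ℝ)
    (hk₁ : 0 ≤ k₁) (hk₃ : 0 ≤ k₃)
    (h12 : ¬(k₁ = 0 ∧ k₂ = 0)) (h23 : ¬(k₂ = 0 ∧ k₃ = 0))
    (hβ₁ : 0 < β₁ * (β₁ + β₂)) (hδ : 0 < δ) (hk2 : k₂ = 0) (hδ1 : δ ≠ 1) :
    (∀ u v : ℝ, 0 < u → 0 < v → gaussK (PKad k₁ k₂ k₃ β₁ β₂ δ) u v = 0) ↔
      β₁ + β₂ = 1 := by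
  subst hk2
  have hk₁ : 0 < k₁ := hk₁.lt_of_ne' fun h => h12 ⟨h, rfl⟩
  have hk₃ : 0 < k₃ := hk₃.lt_of_ne' fun h => h23 ⟨rfl, h⟩
  have hs : β₁ + β₂ ≠ 0 := right_ne_zero_of_mul hβ₁.ne'
  have hP : PKad k₁ 0 k₃ β₁ β₂ δ =
      fun u v => (k₁ * u ^ (β₁ + β₂) + k₃ * v ^ (β₁ + β₂)) ^ (δ / (β₁ + β₂)) := by
    funext u v
    simp [PKad]
  simp +contextual only [hP, gaussK_eq_zero_iff,
    hessDet_rpow_add_rpow_eq_zero_iff hk₁ hk₃ hs (div_ne_zero hδ.ne' hs), div_mul_cancel₀ δ hs,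
    hδ1, or_false]
  exact ⟨fun h => h 1 1 one_pos one_pos, fun h _ _ _ _ => h⟩

/-- In the CES case `k₂ = 0` with `δ ≠ 1`, the Kadiyala surface is developable (its
Gaussian curvature vanishes at every point of `(0,∞)²`) if and only if `β₁ + β₂ = 1`. -/
theorem kadiyala_ces_developable_iff
    (k₁ k₂ k₃ β₁ β₂ δ : ℝ)
    (hsum : k₁ + 2 * k₂ + k₃ = 1) (hk₁ : 0 ≤ k₁) (hk₂ : 0 ≤ k₂) (hk₃ : 0 ≤ k₃)
    (h12 : ¬(k₁ = 0 ∧ k₂ = 0)) (h23 : ¬(k₂ = 0 ∧ k₃ = 0))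
    (hβ₁ : 0 < β₁ * (β₁ + β₂)) (hβ₂ : 0 < β₂ * (β₁ + β₂)) (hδ : 0 < δ) (hk2 : k₂ = 0) (hδ1 : δ ≠ 1) :
    (∀ u v : ℝ, 0 < u → 0 < v → gaussK (PKad k₁ k₂ k₃ β₁ β₂ δ) u v = 0) ↔
      β₁ + β₂ = 1 :=
  kadiyala_ces_developable_iff_general k₁ k₂ k₃ β₁ β₂ δ hk₁ hk₃ h12 h23 hβ₁ hδ hk2 hδ1
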